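/- arXiv:1002.1061 — 2 statements merged into one kernel-verified Lean document; each statement's English description precedes it below -/
import Mathlib

section
/- For a graph G of bounded degree and p > 1, the set BD_p(G) of bounded functions with finite p-Dirichlet sum is closed under pointwise multiplication, and I_p(fg, V)^{1/p} ≤ ‖f‖_∞ I_p(g,V)^{1/p} + ‖g‖_∞ I_p(f,V)^{1/p}; consequently ‖fg‖_{BD_p} ≤ ‖f‖_{BD_p}·‖g‖_{BD_p} where ‖f‖_{BD_p} = I_p(f,V)^{1/p} + ‖f‖_∞. -/
open scoped ENNReal Classical

/-- Minkowski's inequality for `tsum` over `ℝ≥0∞`-valued functions. -/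
lemma ennreal_Lp_add_le_tsum {ι : Type*} (f g : ι → ℝ≥0∞) {p : ℝ} (hp : 1 ≤ p) :
    (∑' i, (f i + g i) ^ p) ^ (1 / p) ≤
      (∑' i, f i ^ p) ^ (1 / p) + (∑' i, g i ^ p) ^ (1 / p) := by
  have hp0 : 0 < p := lt_of_lt_of_le one_pos hp
  set A := (∑' i, f i ^ p) ^ (1 / p)
  set B := (∑' i, g i ^ p) ^ (1 / p)
  have key : ∑' i, (f i + g i) ^ p ≤ (A + B) ^ p := by
    rw [ENNReal.tsum_eq_iSup_sum]
    refine iSup_le fun s => ?_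
    have h1 : (∑ i ∈ s, (f i + g i) ^ p) ^ (1 / p) ≤ A + B := by
      refine le_trans (ENNReal.Lp_add_le s f g hp) (add_le_add ?_ ?_) <;>
        exact ENNReal.rpow_le_rpow (ENNReal.sum_le_tsum s) (by positivity)
    calc ∑ i ∈ s, (f i + g i) ^ p
        = ((∑ i ∈ s, (f i + g i) ^ p) ^ (1 / p)) ^ p := by
          rw [← ENNReal.rpow_mul, one_div_mul_cancel hp0.ne', ENNReal.rpow_one]
      _ ≤ (A + B) ^ p := ENNReal.rpow_le_rpow h1 hp0.le
  calc (∑' i, (f i + g i) ^ p) ^ (1 / p)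
      ≤ ((A + B) ^ p) ^ (1 / p) := ENNReal.rpow_le_rpow key (by positivity)
    _ = A + B := by rw [← ENNReal.rpow_mul, mul_one_div_cancel hp0.ne', ENNReal.rpow_one]

/-- The `p`-Dirichlet sum of a function on the vertices of a graph, valued in `ℝ≥0∞`. -/
noncomputable def graphIp {V : Type*} (G : SimpleGraph V) (p : ℝ) (f : V → ℝ) : ℝ≥0∞ :=
  ∑' e : V × V, if G.Adj e.1 e.2 then ENNReal.ofReal (|f e.2 - f e.1| ^ p) else 0

/-- The sup-norm of a function on the vertices. -/
noncomputable def supNorm {V : Type*} (f : V → ℝ) : ℝ := ⨆ x : V, |f x|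

/-- The `BD_p` norm `‖f‖_{BD_p} = I_p(f,V)^{1/p} + ‖f‖_∞`. -/
noncomputable def graphBDpNorm {V : Type*} (G : SimpleGraph V) (p : ℝ) (f : V → ℝ) : ℝ :=
  (graphIp G p f).toReal ^ (1 / p) + supNorm f

lemma graphIp_eq_tsum_rpow {V : Type*} (G : SimpleGraph V) {p : ℝ} (hp : 0 < p) (f : V → ℝ) :
    graphIp G p f =
      ∑' e : V × V, (if G.Adj e.1 e.2 then ENNReal.ofReal |f e.2 - f e.1| else 0) ^ p := by
  unfold graphIp
  refine tsum_congr fun e => ?_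
  by_cases h : G.Adj e.1 e.2
  · simp only [h, if_true]
    rw [ENNReal.ofReal_rpow_of_nonneg (abs_nonneg _) hp.le]
  · simp [h, ENNReal.zero_rpow_of_pos hp]

lemma supNorm_nonneg {V : Type*} (f : V → ℝ) (hfb : ∀ x : V, |f x| ≤ supNorm f) :
    0 ≤ supNorm f := by
  cases isEmpty_or_nonempty V
  · simp [supNorm, Real.iSup_of_isEmpty]
  · exact le_trans (abs_nonneg _) (hfb (Classical.arbitrary V))

/-- For a graph of bounded degree and `p > 1`, `BD_p(G)` is closed under pointwise
multiplication, with `I_p(fg)^{1/p} ≤ ‖f‖_∞ I_p(g)^{1/p} + ‖g‖_∞ I_p(f)^{1/p}` and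
consequently `‖fg‖_{BD_p} ≤ ‖f‖_{BD_p}·‖g‖_{BD_p}`. -/
theorem graphBDp_submultiplicative {V : Type*} [Countable V] (G : SimpleGraph V)
    (hconn : G.Connected)
    (hdeg : ∃ k : ℕ, ∀ v : V, {u : V | G.Adj v u}.Finite ∧ {u : V | G.Adj v u}.ncard ≤ k)
    (p : ℝ) (hp : 1 < p) (f g : V → ℝ)
    (hfb : ∀ x : V, |f x| ≤ supNorm f) (hgb : ∀ x : V, |g x| ≤ supNorm g)
    (hf : graphIp G p f < ⊤) (hg : graphIp G p g < ⊤) :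
    graphIp G p (fun x => f x * g x) < ⊤ ∧
    (graphIp G p (fun x => f x * g x)).toReal ^ (1 / p) ≤
      supNorm f * (graphIp G p g).toReal ^ (1 / p) +
        supNorm g * (graphIp G p f).toReal ^ (1 / p) ∧
    graphBDpNorm G p (fun x => f x * g x) ≤ graphBDpNorm G p f * graphBDpNorm G p g := by
  have hp0 : 0 < p := lt_trans one_pos hp
  set F := supNorm f with hF
  set Gn := supNorm g with hGn
  have hF0 : 0 ≤ F := supNorm_nonneg f hfb
  have hG0 : 0 ≤ Gn := supNorm_nonneg g hgb
  -- ENNReal-level functions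
  set u : (V → ℝ) → V × V → ℝ≥0∞ := fun h e =>
    if G.Adj e.1 e.2 then ENNReal.ofReal |h e.2 - h e.1| else 0 with hu
  set a : V × V → ℝ≥0∞ := fun e => ENNReal.ofReal F * u g e with ha
  set b : V × V → ℝ≥0∞ := fun e => ENNReal.ofReal Gn * u f e with hb
  have hpt : ∀ e : V × V, u (fun x => f x * g x) e ≤ a e + b e := by
    intro e
    by_cases h : G.Adj e.1 e.2
    · simp only [hu, ha, hb, h, if_true]
      rw [← ENNReal.ofReal_mul hF0, ← ENNReal.ofReal_mul hG0,
        ← ENNReal.ofReal_add (by positivity) (by positivity)]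
      refine ENNReal.ofReal_le_ofReal ?_
      have key : f e.2 * g e.2 - f e.1 * g e.1
          = f e.2 * (g e.2 - g e.1) + g e.1 * (f e.2 - f e.1) := by ring
      calc |f e.2 * g e.2 - f e.1 * g e.1|
          ≤ |f e.2 * (g e.2 - g e.1)| + |g e.1 * (f e.2 - f e.1)| := by
            rw [key]; exact abs_add_le _ _
        _ ≤ F * |g e.2 - g e.1| + Gn * |f e.2 - f e.1| := by
            rw [abs_mul, abs_mul]
            exact add_le_add (mul_le_mul_of_nonneg_right (hfb _) (abs_nonneg _))
              (mul_le_mul_of_nonneg_right (hgb _) (abs_nonneg _))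
    · simp [hu, ha, hb, h]
  have hIfg : graphIp G p (fun x => f x * g x) = ∑' e, (u (fun x => f x * g x) e) ^ p :=
    graphIp_eq_tsum_rpow G hp0 _
  have hIf : graphIp G p f = ∑' e, (u f e) ^ p := graphIp_eq_tsum_rpow G hp0 f
  have hIg : graphIp G p g = ∑' e, (u g e) ^ p := graphIp_eq_tsum_rpow G hp0 g
  have hsum_a : ∑' e, (a e) ^ p = ENNReal.ofReal F ^ p * graphIp G p g := by
    rw [hIg]
    simp only [ha, ENNReal.mul_rpow_of_nonneg _ _ hp0.le]
    exact ENNReal.tsum_mul_left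
  have hsum_b : ∑' e, (b e) ^ p = ENNReal.ofReal Gn ^ p * graphIp G p f := by
    rw [hIf]
    simp only [hb, ENNReal.mul_rpow_of_nonneg _ _ hp0.le]
    exact ENNReal.tsum_mul_left
  have hrpow_mul : ∀ (c : ℝ≥0∞) (x : ℝ≥0∞), (c ^ p * x) ^ (1 / p) = c * x ^ (1 / p) := by
    intro c x
    rw [ENNReal.mul_rpow_of_nonneg _ _ (by positivity), ← ENNReal.rpow_mul,
      mul_one_div_cancel hp0.ne', ENNReal.rpow_one]
  -- main ENNReal inequality
  have main : (graphIp G p (fun x => f x * g x)) ^ (1 / p) ≤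
      ENNReal.ofReal F * (graphIp G p g) ^ (1 / p) +
      ENNReal.ofReal Gn * (graphIp G p f) ^ (1 / p) := by
    calc (graphIp G p (fun x => f x * g x)) ^ (1 / p)
        ≤ (∑' e, (a e + b e) ^ p) ^ (1 / p) := by
          refine ENNReal.rpow_le_rpow ?_ (by positivity)
          rw [hIfg]
          exact ENNReal.tsum_le_tsum fun e => ENNReal.rpow_le_rpow (hpt e) hp0.le
      _ ≤ (∑' e, (a e) ^ p) ^ (1 / p) + (∑' e, (b e) ^ p) ^ (1 / p) :=
          ennreal_Lp_add_le_tsum a b hp.le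
      _ = ENNReal.ofReal F * (graphIp G p g) ^ (1 / p) +
          ENNReal.ofReal Gn * (graphIp G p f) ^ (1 / p) := by
          rw [hsum_a, hsum_b, hrpow_mul, hrpow_mul]
  -- RHS is finite
  have hg' : (graphIp G p g) ^ (1 / p) ≠ ⊤ :=
    (ENNReal.rpow_lt_top_of_nonneg (by positivity) hg.ne).ne
  have hf' : (graphIp G p f) ^ (1 / p) ≠ ⊤ :=
    (ENNReal.rpow_lt_top_of_nonneg (by positivity) hf.ne).ne
  have hRHS_ne : ENNReal.ofReal F * (graphIp G p g) ^ (1 / p) +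
      ENNReal.ofReal Gn * (graphIp G p f) ^ (1 / p) ≠ ⊤ :=
    ENNReal.add_ne_top.2 ⟨ENNReal.mul_ne_top ENNReal.ofReal_ne_top hg',
      ENNReal.mul_ne_top ENNReal.ofReal_ne_top hf'⟩
  -- finiteness of I_p(fg)
  have hfin : graphIp G p (fun x => f x * g x) < ⊤ := by
    by_contra h
    push_neg at h
    have htop : graphIp G p (fun x => f x * g x) = ⊤ := top_le_iff.mp h
    rw [htop, ENNReal.top_rpow_of_pos (by positivity)] at main
    exact hRHS_ne (top_le_iff.mp main)
  -- toReal inequality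
  have main' : (graphIp G p (fun x => f x * g x)).toReal ^ (1 / p) ≤
      F * (graphIp G p g).toReal ^ (1 / p) + Gn * (graphIp G p f).toReal ^ (1 / p) := by
    have := ENNReal.toReal_mono hRHS_ne main
    rwa [ENNReal.toReal_add (ENNReal.mul_ne_top ENNReal.ofReal_ne_top hg')
        (ENNReal.mul_ne_top ENNReal.ofReal_ne_top hf'),
      ENNReal.toReal_mul, ENNReal.toReal_mul, ENNReal.toReal_ofReal hF0,
      ENNReal.toReal_ofReal hG0, ← ENNReal.toReal_rpow, ← ENNReal.toReal_rpow,
      ← ENNReal.toReal_rpow] at this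
  refine ⟨hfin, main', ?_⟩
  -- the BD_p norm inequality
  have hsupfg : supNorm (fun x => f x * g x) ≤ F * Gn := by
    refine Real.iSup_le (fun x => ?_) (by positivity)
    calc |f x * g x| = |f x| * |g x| := abs_mul _ _
      _ ≤ F * Gn := mul_le_mul (hfb x) (hgb x) (abs_nonneg _) hF0
  have hIfT : 0 ≤ (graphIp G p f).toReal ^ (1 / p) := by positivity
  have hIgT : 0 ≤ (graphIp G p g).toReal ^ (1 / p) := by positivity
  unfold graphBDpNorm
  rw [← hF, ← hGn]
  nlinarith [add_le_add main' hsupfg, mul_nonneg hIfT hIgT]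
end

section
/- Let Γ be a κ-net in a manifold M with bounded geometry (properties (V) and (P)) and let f̄ ∈ BD_p(Γ). Define f(x) = Σ_{g∈Γ} f̄(g)ξ_g(x) using the partition of unity {ξ_g}. Then ∫_M |∇f|^p dx ≤ C·I_p(f̄, Γ) for a constant C independent of f̄; in particular f ∈ BD_p(M). -/
open Metric MeasureTheory Filter
open scoped ENNReal Classical
open scoped Topology

lemma net_counting {E : Type*} [MetricSpace E] [MeasurableSpace E] [BorelSpace E]
    (μ : Measure E) (κ : ℝ) (Γ : Set E)
    (hsep : ∀ g ∈ Γ, ∀ h ∈ Γ, g ≠ h → κ ≤ dist g h)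
    (v V : ℝ)
    (hlow : ∀ g ∈ Γ, ENNReal.ofReal v ≤ μ (ball g (κ/2)))
    (x : E) (R : ℝ) (hup : μ (ball x (R + κ/2)) ≤ ENNReal.ofReal V)
    (t : Finset E) (htΓ : ∀ g ∈ t, g ∈ Γ) (ht : ∀ g ∈ t, dist g x ≤ R) :
    (t.card : ℝ≥0∞) * ENNReal.ofReal v ≤ ENNReal.ofReal V := by
  have hdisj : (t : Set E).PairwiseDisjoint (fun g => ball g (κ/2)) := by
    intro a ha b hb hab
    exact ball_disjoint_ball (by
      have := hsep a (htΓ a ha) b (htΓ b hb) hab; linarith)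
  have hmeas : μ (⋃ g ∈ t, ball g (κ/2)) = ∑ g ∈ t, μ (ball g (κ/2)) :=
    measure_biUnion_finset hdisj (fun g _ => measurableSet_ball)
  calc (t.card : ℝ≥0∞) * ENNReal.ofReal v
      = ∑ _g ∈ t, ENNReal.ofReal v := by rw [Finset.sum_const, nsmul_eq_mul]
    _ ≤ ∑ g ∈ t, μ (ball g (κ/2)) := Finset.sum_le_sum fun g hg => hlow g (htΓ g hg)
    _ = μ (⋃ g ∈ t, ball g (κ/2)) := hmeas.symm
    _ ≤ μ (ball x (R + κ/2)) := by
        refine measure_mono ?_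
        intro y hy
        simp only [Set.mem_iUnion, mem_ball] at hy ⊢
        obtain ⟨g, hg, hy⟩ := hy
        have h1 := ht g hg
        have h2 := dist_triangle y g x
        linarith
    _ ≤ ENNReal.ofReal V := hup

lemma net_card_bound {E : Type*} [MetricSpace E] [MeasurableSpace E] [BorelSpace E]
    (μ : Measure E) (κ : ℝ) (Γ : Set E)
    (hsep : ∀ g ∈ Γ, ∀ h ∈ Γ, g ≠ h → κ ≤ dist g h)
    (v V : ℝ) (hv : 0 < v) (hV : 0 < V)
    (hlow : ∀ g ∈ Γ, ENNReal.ofReal v ≤ μ (ball g (κ/2)))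
    (x : E) (R : ℝ) (hup : μ (ball x (R + κ/2)) ≤ ENNReal.ofReal V)
    (t : Finset E) (htΓ : ∀ g ∈ t, g ∈ Γ) (ht : ∀ g ∈ t, dist g x ≤ R) :
    (t.card : ℝ) ≤ V / v := by
  have h := net_counting μ κ Γ hsep v V hlow x R hup t htΓ ht
  rw [← ENNReal.ofReal_natCast, ← ENNReal.ofReal_mul (by positivity)] at h
  rw [ENNReal.ofReal_le_ofReal_iff hV.le] at h
  rw [le_div_iff₀ hv]
  exact h

lemma net_finite {E : Type*} [MetricSpace E] [MeasurableSpace E] [BorelSpace E]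
    (μ : Measure E) (κ : ℝ) (Γ : Set E)
    (hsep : ∀ g ∈ Γ, ∀ h ∈ Γ, g ≠ h → κ ≤ dist g h)
    (v V : ℝ) (hv : 0 < v) (hV : 0 < V)
    (hlow : ∀ g ∈ Γ, ENNReal.ofReal v ≤ μ (ball g (κ/2)))
    (x : E) (R : ℝ) (hup : μ (ball x (R + κ/2)) ≤ ENNReal.ofReal V) :
    {g : E | g ∈ Γ ∧ dist g x ≤ R}.Finite := by
  by_contra hinf
  have hinf2 : Set.Infinite {g : E | g ∈ Γ ∧ dist g x ≤ R} := hinf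
  obtain ⟨t, hts, htcard⟩ := hinf2.exists_subset_card_eq (⌈V / v⌉₊ + 1)
  have h := net_card_bound μ κ Γ hsep v V hv hV hlow x R hup t
    (fun g hg => (hts hg).1) (fun g hg => (hts hg).2)
  rw [htcard] at h
  have h2 := Nat.le_ceil (V / v)
  push_cast at h
  linarith

/-- The `p`-Dirichlet sum of a function on a `κ`-net `Γ` (neighbors at distance in `(0, 3κ]`). -/
noncomputable def netIp {E : Type*} [MetricSpace E] (Γ : Set E) (κ : ℝ) (p : ℝ)
    (f : Γ → ℝ) : ℝ≥0∞ :=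
  ∑' e : Γ × Γ, if 0 < dist (e.1 : E) (e.2 : E) ∧ dist (e.1 : E) (e.2 : E) ≤ 3 * κ then
    ENNReal.ofReal (|f e.2 - f e.1| ^ p) else 0

/-- Extension from the net to the manifold: if `fbar ∈ BD_p(Γ)` for a `κ`-net `Γ` in a space
with bounded geometry (volume bounds (V) and Poincaré inequality (P)), and
`f = Σ_g fbar(g) ξ_g` via the partition of unity `{ξ_g}`, then
`∫ |∇f|^p ≤ C·I_p(fbar,Γ)` with `C` independent of `fbar`; in particular `f ∈ BD_p(M)`. -/
theorem net_extension_dirichlet_bound {E : Type*} [NormedAddCommGroup E]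
    [InnerProductSpace ℝ E] [MeasurableSpace E] [BorelSpace E] (μ : Measure E)
    (V₀ V₁ : ℝ → ℝ)
    (hV₀pos : ∀ r : ℝ, 0 < r → 0 < V₀ r) (hV₁pos : ∀ r : ℝ, 0 < r → 0 < V₁ r)
    (hV₀mono : ∀ r s : ℝ, 0 < r → r ≤ s → V₀ r ≤ V₀ s)
    (hV₁mono : ∀ r s : ℝ, 0 < r → r ≤ s → V₁ r ≤ V₁ s)
    -- property (V): uniform two-sided volume bounds
    (hvol : ∀ (x : E) (r : ℝ), 0 < r →
      ENNReal.ofReal (V₀ r) ≤ μ (ball x r) ∧ μ (ball x r) ≤ ENNReal.ofReal (V₁ r))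
    -- property (P): uniform local (1,1)-Poincaré inequality
    (hpoincare : ∀ r : ℝ, 0 < r → ∃ Cr : ℝ, ∀ (y : E) (u : E → ℝ), ContDiff ℝ (⊤ : ℕ∞) u →
      ∫ x in ball y r, |u x - ⨍ z in ball y r, u z ∂μ| ∂μ ≤
        Cr * ∫ x in ball y r, ‖fderiv ℝ u x‖ ∂μ)
    (κ : ℝ) (hκ : 0 < κ) (Γ : Set E)
    (hsep : ∀ g ∈ Γ, ∀ h ∈ Γ, g ≠ h → κ ≤ dist g h)
    (hmax : ∀ Γ' : Set E, Γ ⊆ Γ' → (∀ g ∈ Γ', ∀ h ∈ Γ', g ≠ h → κ ≤ dist g h) → Γ' = Γ)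
    (ξ : Γ → E → ℝ) (c : ℝ) (hc : 0 ≤ c)
    (hξ01 : ∀ (g : Γ) (x : E), 0 ≤ ξ g x ∧ ξ g x ≤ 1)
    (hξsum : ∀ x : E, ∑' g : Γ, ξ g x = 1)
    (hξsupp : ∀ (g : Γ) (x : E), x ∉ ball (g : E) (3 * κ / 2) → ξ g x = 0)
    (hξdiff : ∀ g : Γ, Differentiable ℝ (ξ g))
    (hξgrad : ∀ (g : Γ) (x : E), ‖fderiv ℝ (ξ g) x‖ ≤ c)
    (p : ℝ) (hp : 1 < p) :
    ∃ C : ℝ, 0 < C ∧ ∀ fbar : Γ → ℝ, (∃ B : ℝ, ∀ g : Γ, |fbar g| ≤ B) →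
      netIp Γ κ p fbar < ⊤ →
      ∫⁻ x, ENNReal.ofReal (‖fderiv ℝ (fun y => ∑' g : Γ, fbar g * ξ g y) x‖ ^ p) ∂μ ≤
        ENNReal.ofReal C * netIp Γ κ p fbar := by
  
  classical
  rcases isEmpty_or_nonempty E with hE | hE
  · refine ⟨1, one_pos, fun fbar _ _ => ?_⟩
    rw [Measure.eq_zero_of_isEmpty μ, lintegral_zero_measure]
    exact zero_le
  obtain ⟨x₀⟩ := hE
  have hκ2 : (0:ℝ) < κ/2 := by linarith
  set v : ℝ := V₀ (κ/2) with hv_def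
  have hv : 0 < v := hV₀pos _ hκ2
  have hlow : ∀ g ∈ Γ, ENNReal.ofReal v ≤ μ (ball g (κ/2)) :=
    fun g _ => (hvol g (κ/2) hκ2).1
  have hupR : ∀ (x : E) (R : ℝ), 0 < R → μ (ball x (R + κ/2)) ≤ ENNReal.ofReal (V₁ (R + κ/2)) :=
    fun x R hR => (hvol x _ (by linarith)).2
  -- Γ is countable
  have hΓc : Γ.Countable := by
    have hsub : Γ ⊆ ⋃ n : ℕ, {g : E | g ∈ Γ ∧ dist g x₀ ≤ (n:ℝ) + 1} := by
      intro g hg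
      simp only [Set.mem_iUnion, Set.mem_setOf_eq]
      obtain ⟨n, hn⟩ := exists_nat_ge (dist g x₀)
      exact ⟨n, hg, by linarith⟩
    refine Set.Countable.mono hsub (Set.countable_iUnion fun n => Set.Finite.countable ?_)
    exact net_finite μ κ Γ hsep v (V₁ ((n:ℝ)+1+κ/2)) hv (hV₁pos _ (by positivity)) hlow x₀ _
      (hupR x₀ _ (by positivity))
  haveI : Countable Γ := hΓc.to_subtype
  -- every point has a net point within κ
  have hnear : ∀ x : E, ∃ g : Γ, dist x (g:E) < κ := by
    intro x
    by_contra hcon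
    push_neg at hcon
    have hxΓ : x ∉ Γ := by
      intro hx
      have := hcon ⟨x, hx⟩
      simp only [dist_self] at this
      linarith
    have hins : insert x Γ = Γ := by
      refine hmax _ (Set.subset_insert _ _) ?_
      intro a ha b hb hab
      rcases ha with rfl | ha
      · rcases hb with rfl | hb
        · exact absurd rfl hab
        · exact hcon ⟨b, hb⟩
      · rcases hb with rfl | hb
        · rw [dist_comm]; exact hcon ⟨a, ha⟩
        · exact hsep a ha b hb hab
    exact hxΓ (hins ▸ Set.mem_insert x Γ)
  -- uniform neighbor count and constants
  set Nr : ℝ := V₁ (3*κ + κ/2) / v with hNr_def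
  have hNr : 0 < Nr := div_pos (hV₁pos _ (by linarith)) hv
  set c1 : ℝ := c + 1 with hc1_def
  have hc1 : 0 < c1 := by linarith
  set K : ℝ := (c1 * Nr) ^ p with hK_def
  have hK : 0 < K := Real.rpow_pos_of_pos (by positivity) p
  refine ⟨K * V₁ κ, mul_pos hK (hV₁pos κ hκ), fun fbar _ _ => ?_⟩
  set f : E → ℝ := fun y => ∑' g : Γ, fbar g * ξ g y with hf_def
  set G : Γ → ℝ≥0∞ := fun g => ∑' h : Γ,
    if 0 < dist (g:E) (h:E) ∧ dist (g:E) (h:E) ≤ 3*κ then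
      ENNReal.ofReal (|fbar h - fbar g| ^ p) else 0 with hG_def
  -- pointwise bound
  have hpt : ∀ x : E, ENNReal.ofReal (‖fderiv ℝ f x‖ ^ p) ≤
      ∑' g : Γ, (ball (g:E) κ).indicator (fun _ => ENNReal.ofReal K * G g) x := by
    intro x
    obtain ⟨g₀, hg₀⟩ := hnear x
    have hFfin : {g : Γ | dist (g:E) x ≤ 2*κ}.Finite := by
      have hfin := net_finite μ κ Γ hsep v (V₁ (2*κ+κ/2)) hv (hV₁pos _ (by linarith)) hlow x (2*κ)
        (hupR x _ (by linarith))
      have heq : {g : Γ | dist (g:E) x ≤ 2*κ}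
          = (Subtype.val) ⁻¹' {g : E | g ∈ Γ ∧ dist g x ≤ 2*κ} := by
        ext g; simp [g.2]
      rw [heq]
      exact Set.Finite.preimage Subtype.val_injective.injOn hfin
    set F : Finset Γ := hFfin.toFinset with hF_def
    have hFmem : ∀ g : Γ, g ∈ F ↔ dist (g:E) x ≤ 2*κ := by
      intro g; rw [hF_def, Set.Finite.mem_toFinset]; rfl
    have hoff : ∀ y ∈ ball x (κ/2), ∀ g : Γ, g ∉ F → ξ g y = 0 := by
      intro y hy g hg
      refine hξsupp g y ?_
      rw [mem_ball] at hy
      simp only [mem_ball]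
      intro hlt
      rw [hFmem] at hg
      push_neg at hg
      have htri := dist_triangle (g:E) y x
      rw [dist_comm (g:E) y] at htri
      linarith
    have hF1 : ∀ y ∈ ball x (κ/2), ∑ g ∈ F, ξ g y = 1 := by
      intro y hy
      rw [← hξsum y]
      exact (tsum_eq_sum (fun g hg => hoff y hy g hg)).symm
    have hfeq : ∀ y ∈ ball x (κ/2), f y = (∑ g ∈ F, (fbar g - fbar g₀) * ξ g y) + fbar g₀ := by
      intro y hy
      have h1 : f y = ∑ g ∈ F, fbar g * ξ g y :=
        tsum_eq_sum (fun g hg => by rw [hoff y hy g hg, mul_zero])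
      have h2 := hF1 y hy
      have h3 : ∑ g ∈ F, (fbar g - fbar g₀) * ξ g y
          = ∑ g ∈ F, fbar g * ξ g y - fbar g₀ * ∑ g ∈ F, ξ g y := by
        rw [Finset.mul_sum, ← Finset.sum_sub_distrib]
        exact Finset.sum_congr rfl fun g _ => by ring
      rw [h1, h3, h2]; ring
    have hball : ball x (κ/2) ∈ 𝓝 x := ball_mem_nhds x hκ2
    have hev : f =ᶠ[𝓝 x] fun y => (∑ g ∈ F, (fbar g - fbar g₀) * ξ g y) + fbar g₀ :=
      eventuallyEq_of_mem hball hfeq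
    have hDf : fderiv ℝ f x = ∑ g ∈ F, (fbar g - fbar g₀) • fderiv ℝ (ξ g) x := by
      rw [hev.fderiv_eq]
      have hadd : fderiv ℝ (fun y => (∑ g ∈ F, (fbar g - fbar g₀) * ξ g y) + fbar g₀) x
          = fderiv ℝ (fun y => ∑ g ∈ F, (fbar g - fbar g₀) * ξ g y) x := fderiv_add_const _
      rw [hadd, fderiv_fun_sum (fun g _ => ((hξdiff g).differentiableAt).const_mul _)]
      exact Finset.sum_congr rfl fun g _ => fderiv_const_mul ((hξdiff g).differentiableAt) _
    have hgradzero : ∀ g : Γ, ¬ dist x (g:E) < 3*κ/2 → fderiv ℝ (ξ g) x = 0 := by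
      intro g hg
      have hx0 : ξ g x = 0 := hξsupp g x (by simp only [mem_ball]; exact fun h => hg (by linarith))
      refine IsLocalMin.fderiv_eq_zero ?_
      refine Filter.Eventually.of_forall (fun y => ?_)
      rw [hx0]; exact (hξ01 g y).1
    set P : Γ → Prop := fun g => dist x (g:E) < 3*κ/2 ∧ g ≠ g₀ with hP_def
    set F2 := F.filter P with hF2_def
    have hsum_eq : ∑ g ∈ F, (fbar g - fbar g₀) • fderiv ℝ (ξ g) x
        = ∑ g ∈ F2, (fbar g - fbar g₀) • fderiv ℝ (ξ g) x := by
      symm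
      refine Finset.sum_filter_of_ne ?_
      intro g hg hne
      constructor
      · by_contra hd
        rw [hgradzero g hd, smul_zero] at hne
        exact hne rfl
      · rintro rfl
        rw [sub_self, zero_smul] at hne
        exact hne rfl
    have hnorm : ‖fderiv ℝ f x‖ ≤ c1 * ∑ g ∈ F2, |fbar g - fbar g₀| := by
      rw [hDf, hsum_eq]
      refine le_trans (norm_sum_le _ _) ?_
      rw [Finset.mul_sum]
      refine Finset.sum_le_sum (fun g _ => ?_)
      rw [norm_smul, Real.norm_eq_abs]
      calc |fbar g - fbar g₀| * ‖fderiv ℝ (ξ g) x‖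
          ≤ |fbar g - fbar g₀| * c := mul_le_mul_of_nonneg_left (hξgrad g x) (abs_nonneg _)
        _ ≤ c1 * |fbar g - fbar g₀| := by
            rw [mul_comm]
            exact mul_le_mul_of_nonneg_right (by linarith) (abs_nonneg _)
    have hF2nb : ∀ g ∈ F2, 0 < dist (g₀:E) (g:E) ∧ dist (g₀:E) (g:E) ≤ 3*κ := by
      intro g hg
      rw [hF2_def, Finset.mem_filter] at hg
      obtain ⟨hgF, hd, hne⟩ := hg
      constructor
      · rw [dist_pos]
        exact fun h => hne (Subtype.ext h.symm)
      · have htri := dist_triangle (g₀:E) x (g:E)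
        have hcm : dist (g₀:E) x = dist x (g₀:E) := dist_comm _ _
        linarith
    have hF2card : (F2.card : ℝ) ≤ Nr := by
      have hcb := net_card_bound μ κ Γ hsep v (V₁ (3*κ + κ/2)) hv (hV₁pos _ (by linarith)) hlow
        (g₀:E) (3*κ) (hupR (g₀:E) (3*κ) (by linarith)) (F2.image Subtype.val)
        (fun g hg => by
          obtain ⟨g', _, rfl⟩ := Finset.mem_image.mp hg
          exact g'.2)
        (fun g hg => by
          obtain ⟨g', hg', rfl⟩ := Finset.mem_image.mp hg
          have := (hF2nb g' hg').2
          rw [dist_comm]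
          exact this)
      rwa [Finset.card_image_of_injective _ Subtype.val_injective] at hcb
    refine le_trans ?_ (ENNReal.le_tsum g₀)
    have hxball : x ∈ ball (g₀:E) κ := by rw [mem_ball]; exact hg₀
    rw [Set.indicator_of_mem hxball]
    rcases F2.eq_empty_or_nonempty with hF2e | hF2ne
    · have h0 : ‖fderiv ℝ f x‖ = 0 := by
        have hn := hnorm
        rw [hF2e, Finset.sum_empty, mul_zero] at hn
        exact le_antisymm hn (norm_nonneg _)
      rw [h0, Real.zero_rpow (by linarith : p ≠ 0)]
      simp
    obtain ⟨gm, hgm, hmax'⟩ := Finset.exists_max_image F2 (fun g => |fbar g - fbar g₀|) hF2ne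
    have hsum_le : ∑ g ∈ F2, |fbar g - fbar g₀| ≤ Nr * |fbar gm - fbar g₀| := by
      calc ∑ g ∈ F2, |fbar g - fbar g₀| ≤ ∑ _g ∈ F2, |fbar gm - fbar g₀| :=
            Finset.sum_le_sum (fun g hg => hmax' g hg)
        _ = F2.card * |fbar gm - fbar g₀| := by rw [Finset.sum_const, nsmul_eq_mul]
        _ ≤ Nr * |fbar gm - fbar g₀| := mul_le_mul_of_nonneg_right hF2card (abs_nonneg _)
    have hnorm2 : ‖fderiv ℝ f x‖ ≤ (c1 * Nr) * |fbar gm - fbar g₀| := by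
      calc ‖fderiv ℝ f x‖ ≤ c1 * ∑ g ∈ F2, |fbar g - fbar g₀| := hnorm
        _ ≤ c1 * (Nr * |fbar gm - fbar g₀|) := mul_le_mul_of_nonneg_left hsum_le (le_of_lt hc1)
        _ = (c1 * Nr) * |fbar gm - fbar g₀| := by ring
    have hrp : ‖fderiv ℝ f x‖ ^ p ≤ K * ∑ g ∈ F2, |fbar g - fbar g₀| ^ p := by
      calc ‖fderiv ℝ f x‖ ^ p ≤ ((c1*Nr) * |fbar gm - fbar g₀|) ^ p :=
            Real.rpow_le_rpow (norm_nonneg _) hnorm2 (by linarith)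
        _ = K * |fbar gm - fbar g₀| ^ p := by
            rw [Real.mul_rpow (by positivity) (abs_nonneg _)]
        _ ≤ K * ∑ g ∈ F2, |fbar g - fbar g₀| ^ p := by
            refine mul_le_mul_of_nonneg_left ?_ hK.le
            exact Finset.single_le_sum (f := fun g => |fbar g - fbar g₀| ^ p) (fun g _ => Real.rpow_nonneg (abs_nonneg _) p) hgm
    calc ENNReal.ofReal (‖fderiv ℝ f x‖ ^ p)
        ≤ ENNReal.ofReal (K * ∑ g ∈ F2, |fbar g - fbar g₀| ^ p) := ENNReal.ofReal_le_ofReal hrp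
      _ = ENNReal.ofReal K * ENNReal.ofReal (∑ g ∈ F2, |fbar g - fbar g₀| ^ p) :=
          ENNReal.ofReal_mul hK.le
      _ ≤ ENNReal.ofReal K * G g₀ := by
          refine mul_le_mul_right ?_ _
          rw [ENNReal.ofReal_sum_of_nonneg (fun g _ => Real.rpow_nonneg (abs_nonneg _) p)]
          calc ∑ g ∈ F2, ENNReal.ofReal (|fbar g - fbar g₀| ^ p)
              = ∑ g ∈ F2, (if 0 < dist (g₀:E) (g:E) ∧ dist (g₀:E) (g:E) ≤ 3*κ then
                  ENNReal.ofReal (|fbar g - fbar g₀| ^ p) else 0) :=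
                Finset.sum_congr rfl (fun g hg => by rw [if_pos (hF2nb g hg)])
            _ ≤ G g₀ := ENNReal.sum_le_tsum F2
  -- integrate the pointwise bound
  calc ∫⁻ x, ENNReal.ofReal (‖fderiv ℝ f x‖ ^ p) ∂μ
      ≤ ∫⁻ x, ∑' g : Γ, (ball (g:E) κ).indicator (fun _ => ENNReal.ofReal K * G g) x ∂μ :=
        lintegral_mono hpt
    _ = ∑' g : Γ, ∫⁻ x, (ball (g:E) κ).indicator (fun _ => ENNReal.ofReal K * G g) x ∂μ :=
        lintegral_tsum (fun g => (measurable_const.indicator measurableSet_ball).aemeasurable)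
    _ = ∑' g : Γ, (ENNReal.ofReal K * G g) * μ (ball (g:E) κ) := by
        refine tsum_congr (fun g => ?_)
        rw [lintegral_indicator measurableSet_ball, setLIntegral_const]
    _ ≤ ∑' g : Γ, (ENNReal.ofReal K * G g) * ENNReal.ofReal (V₁ κ) := by
        refine ENNReal.tsum_le_tsum (fun g => ?_)
        exact mul_le_mul_right (hvol (g:E) κ hκ).2 _
    _ = (ENNReal.ofReal K * ENNReal.ofReal (V₁ κ)) * ∑' g : Γ, G g := by
        rw [← ENNReal.tsum_mul_left]
        refine tsum_congr (fun g => ?_); ring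
    _ = ENNReal.ofReal (K * V₁ κ) * netIp Γ κ p fbar := by
        have hnet : netIp Γ κ p fbar = ∑' g : Γ, G g := by
          rw [netIp, ENNReal.tsum_prod']
        rw [hnet, ENNReal.ofReal_mul hK.le]
end
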